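/- arXiv:1911.00154 — 2 statements merged into one kernel-verified Lean document; each statement's English description precedes it below -/
import Mathlib

section
/- Let q be a prime power, n ≥ k ≥ e ≥ 1. Let Q_1 ⊆ F_q^{k×n} be a code with minimum rank distance e, and let Q_2 ⊆ F_q^{k×n} be a code with minimum rank distance e such that every element of Q_2 has rank at most k − e. Then the family C = {rowspace(I_k | A) : A ∈ Q_1} ∪ {rowspace(B | I_k) : B ∈ Q_2} consists of exactly |Q_1| + |Q_2| distinct k-dimensional subspaces of F_q^{n+k} with pairwise subspace distances at least 2e. In particular, A_q(n+k, 2e, k) ≥ |Q_1| + |Q_2|. -/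
open Matrix

/-- The row space of a matrix: the span of its rows. -/
noncomputable def rowSpan {F : Type*} [Field F] {k c : ℕ} (M : Matrix (Fin k) (Fin c) F) :
    Submodule F (Fin c → F) :=
  Submodule.span F (Set.range M)

/-- The subspace distance `d_S(U, W) = dim(U + W) - dim(U ∩ W)`. -/
noncomputable def sDist {F : Type*} [Field F] {N : ℕ} (U W : Submodule F (Fin N → F)) : ℕ :=
  Module.finrank F ↥(U ⊔ W) - Module.finrank F ↥(U ⊓ W)

/-- `rowspace (I_k | A)` as a subspace of `F^(n+k)`, with `I_k` in the first `k` coordinates. -/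
noncomputable def liftId {F : Type*} [Field F] {k n : ℕ} (A : Matrix (Fin k) (Fin n) F) :
    Submodule F (Fin (n + k) → F) :=
  rowSpan ((Matrix.fromCols (1 : Matrix (Fin k) (Fin k) F) A).submatrix id
    ((finSumFinEquiv.trans (finCongr (Nat.add_comm k n))).symm))

/-- `rowspace (B | I_k)` as a subspace of `F^(n+k)`, with `I_k` in the last `k` coordinates. -/
noncomputable def liftIdR {F : Type*} [Field F] {k n : ℕ} (B : Matrix (Fin k) (Fin n) F) :
    Submodule F (Fin (n + k) → F) :=
  rowSpan ((Matrix.fromCols B (1 : Matrix (Fin k) (Fin k) F)).submatrix id finSumFinEquiv.symm)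

/-- `A_q(N, d, k)`: the maximum size of a constant dimension code of `k`-dimensional
subspaces of `F^N` with pairwise subspace distances at least `d`. -/
noncomputable def Aq (F : Type*) [Field F] (N d k : ℕ) : ℕ :=
  sSup {M : ℕ | ∃ C : Set (Submodule F (Fin N → F)), C.Finite ∧ C.ncard = M ∧
    (∀ U ∈ C, Module.finrank F ↥U = k) ∧
    (∀ U ∈ C, ∀ W ∈ C, U ≠ W → d ≤ sDist U W)}

/-!
Both kinds of lifted subspaces are graphs: a vector of `rowspace (I_k | A)` is determined by its
`I_k`-coordinates `y`, its remaining coordinates being `y A`. So two lifts of the same kind meet in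
a copy of `ker (A - A')`, of dimension `k - rank (A - A') ≤ k - e`. A vector in
`rowspace (I_k | A) ∩ rowspace (B | I_k)` is determined by its first `k` coordinates, which (as
`k ≤ n`) lie in the row space of `B` truncated to `k` columns, so this intersection has dimension
at most `rank B ≤ k - e`. Since `d_S(U, W) = 2k - 2 dim (U ∩ W)` for `k`-dimensional `U` and `W`,
all distances are at least `2e`, and `e ≥ 1` makes the `|Q₁| + |Q₂|` lifts pairwise distinct.
-/

section GraphSpan

variable {F : Type*} [Field F] {N k : ℕ} {ν : Type*}

/-- `rowspace (I_k | A)`, with column `j` of `F^N` taken from column `σ j` of `(I_k | A)`. -/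
noncomputable def graphSpan (A : Matrix (Fin k) ν F) (σ : Fin N ≃ Fin k ⊕ ν) :
    Submodule F (Fin N → F) :=
  rowSpan ((fromCols (1 : Matrix (Fin k) (Fin k) F) A).submatrix id σ)

def graphHead (σ : Fin N ≃ Fin k ⊕ ν) : (Fin N → F) →ₗ[F] (Fin k → F) :=
  LinearMap.funLeft F F (σ.symm ∘ Sum.inl)

def graphTail (σ : Fin N ≃ Fin k ⊕ ν) : (Fin N → F) →ₗ[F] (ν → F) :=
  LinearMap.funLeft F F (σ.symm ∘ Sum.inr)

variable {A A' : Matrix (Fin k) ν F} {σ : Fin N ≃ Fin k ⊕ ν}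

lemma vecMul_submatrix_fromCols_one (y : Fin k → F) :
    y ᵥ* (fromCols 1 A).submatrix id σ = Sum.elim y (y ᵥ* A) ∘ σ := by
  ext j
  change (y ᵥ* fromCols 1 A) (σ j) = _
  rw [vecMul_fromCols, vecMul_one]
  rfl

lemma graphHead_vecMul (y : Fin k → F) :
    graphHead σ (y ᵥ* (fromCols 1 A).submatrix id σ) = y := by
  ext i
  simp [graphHead, vecMul_submatrix_fromCols_one]

lemma graphTail_vecMul (y : Fin k → F) :
    graphTail σ (y ᵥ* (fromCols 1 A).submatrix id σ) = y ᵥ* A := by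
  ext j
  simp [graphTail, vecMul_submatrix_fromCols_one]

lemma graphSpan_eq_range :
    graphSpan A σ = LinearMap.range ((fromCols 1 A).submatrix id σ).vecMulLinear :=
  (range_vecMulLinear _).symm

lemma eq_vecMul_graphHead {v : Fin N → F} (hv : v ∈ graphSpan A σ) :
    v = graphHead σ v ᵥ* (fromCols 1 A).submatrix id σ := by
  rw [graphSpan_eq_range] at hv
  obtain ⟨y, rfl⟩ := hv
  rw [vecMulLinear_apply, graphHead_vecMul]

lemma graphTail_eq_of_mem {v : Fin N → F} (hv : v ∈ graphSpan A σ) :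
    graphTail σ v = graphHead σ v ᵥ* A := by
  rw [eq_vecMul_graphHead hv, graphTail_vecMul, graphHead_vecMul]

lemma finrank_map_graphHead {U : Submodule F (Fin N → F)} (hU : U ≤ graphSpan A σ) :
    Module.finrank F (U.map (graphHead σ)) = Module.finrank F U := by
  rw [← LinearMap.range_domRestrict]
  refine LinearMap.finrank_range_of_inj fun v w hvw => Subtype.ext ?_
  rw [eq_vecMul_graphHead (hU v.2), eq_vecMul_graphHead (hU w.2)]
  exact congrArg (· ᵥ* _) hvw

lemma finrank_graphSpan : Module.finrank F (graphSpan A σ) = k := by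
  have htop : (graphSpan A σ).map (graphHead σ) = ⊤ := by
    refine eq_top_iff.mpr fun y _ => ⟨_, ?_, graphHead_vecMul (A := A) y⟩
    rw [graphSpan_eq_range]
    exact LinearMap.mem_range_self _ y
  rw [← finrank_map_graphHead le_rfl, htop, finrank_top, Module.finrank_fin_fun]

lemma finrank_graphSpan_inf_graphSpan_add_rank_le [Fintype ν] :
    Module.finrank F ↥(graphSpan A σ ⊓ graphSpan A' σ) + (A - A').rank ≤ k := by
  have hker : (graphSpan A σ ⊓ graphSpan A' σ).map (graphHead σ) ≤
      LinearMap.ker (A - A').vecMulLinear := by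
    rintro _ ⟨v, ⟨hv, hv'⟩, rfl⟩
    rw [LinearMap.mem_ker, vecMulLinear_apply, vecMul_sub, ← graphTail_eq_of_mem hv,
      ← graphTail_eq_of_mem hv', sub_self]
  have hrank := LinearMap.finrank_range_add_finrank_ker (A - A').vecMulLinear
  rw [range_vecMulLinear, ← rank_eq_finrank_span_row, Module.finrank_fin_fun] at hrank
  have := Submodule.finrank_mono hker
  rw [finrank_map_graphHead inf_le_left] at this
  omega

end GraphSpan

section Lifts

variable {F : Type*} [Field F] {k n : ℕ}

def liftIdCols (k n : ℕ) : Fin (n + k) ≃ Fin k ⊕ Fin n :=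
  (finSumFinEquiv.trans (finCongr (Nat.add_comm k n))).symm

def liftIdRCols (k n : ℕ) : Fin (n + k) ≃ Fin k ⊕ Fin n :=
  finSumFinEquiv.symm.trans (Equiv.sumComm (Fin n) (Fin k))

lemma liftId_eq_graphSpan (A : Matrix (Fin k) (Fin n) F) :
    liftId A = graphSpan A (liftIdCols k n) :=
  rfl

lemma liftIdR_eq_graphSpan (B : Matrix (Fin k) (Fin n) F) :
    liftIdR B = graphSpan B (liftIdRCols k n) := by
  have hswap :
      fromCols B 1 = (fromCols (1 : Matrix (Fin k) (Fin k) F) B).submatrix id Sum.swap := by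
    ext i (j | j) <;> rfl
  rw [liftIdR, graphSpan, hswap, submatrix_submatrix]
  rfl

lemma finrank_liftId (A : Matrix (Fin k) (Fin n) F) : Module.finrank F (liftId A) = k := by
  rw [liftId_eq_graphSpan, finrank_graphSpan]

lemma finrank_liftIdR (B : Matrix (Fin k) (Fin n) F) : Module.finrank F (liftIdR B) = k := by
  rw [liftIdR_eq_graphSpan, finrank_graphSpan]

lemma finrank_liftId_inf_liftId_add_rank_le (A A' : Matrix (Fin k) (Fin n) F) :
    Module.finrank F ↥(liftId A ⊓ liftId A') + (A - A').rank ≤ k := by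
  rw [liftId_eq_graphSpan, liftId_eq_graphSpan]
  exact finrank_graphSpan_inf_graphSpan_add_rank_le

lemma finrank_liftIdR_inf_liftIdR_add_rank_le (B B' : Matrix (Fin k) (Fin n) F) :
    Module.finrank F ↥(liftIdR B ⊓ liftIdR B') + (B - B').rank ≤ k := by
  rw [liftIdR_eq_graphSpan, liftIdR_eq_graphSpan]
  exact finrank_graphSpan_inf_graphSpan_add_rank_le

/-- For `k ≤ n`, the identity block of `(I_k | A)` sits inside the `B` block of `(B | I_k)`. -/
lemma graphHead_liftIdCols (hkn : k ≤ n) (v : Fin (n + k) → F) :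
    graphHead (liftIdCols k n) v =
      LinearMap.funLeft F F (Fin.castLE hkn) (graphTail (liftIdRCols k n) v) :=
  rfl

lemma finrank_liftId_inf_liftIdR_le (hkn : k ≤ n) (A B : Matrix (Fin k) (Fin n) F) :
    Module.finrank F ↥(liftId A ⊓ liftIdR B) ≤ B.rank := by
  have hmap : (liftId A ⊓ liftIdR B).map (graphHead (liftIdCols k n)) ≤
      (LinearMap.range B.vecMulLinear).map (LinearMap.funLeft F F (Fin.castLE hkn)) := by
    rintro _ ⟨v, ⟨-, hv⟩, rfl⟩
    rw [liftIdR_eq_graphSpan] at hv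
    rw [graphHead_liftIdCols hkn, graphTail_eq_of_mem hv]
    exact Submodule.mem_map_of_mem (LinearMap.mem_range_self _ _)
  calc Module.finrank F ↥(liftId A ⊓ liftIdR B)
      = Module.finrank F ↥((liftId A ⊓ liftIdR B).map (graphHead (liftIdCols k n))) :=
        (finrank_map_graphHead (inf_le_left.trans (liftId_eq_graphSpan A).le)).symm
    _ ≤ Module.finrank F ↥(LinearMap.range B.vecMulLinear) :=
        (Submodule.finrank_mono hmap).trans (Submodule.finrank_map_le _ _)
    _ = B.rank := by rw [range_vecMulLinear, rank_eq_finrank_span_row]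

end Lifts

section Codes

variable {F : Type*} [Field F] {N k e : ℕ}

lemma sDist_eq (U W : Submodule F (Fin N → F)) :
    sDist U W = Module.finrank F U + Module.finrank F W - 2 * Module.finrank F ↥(U ⊓ W) := by
  have := Submodule.finrank_sup_add_finrank_inf_eq U W
  unfold sDist
  omega

lemma ncard_le_Aq [Finite F] {d : ℕ} {C : Set (Submodule F (Fin N → F))}
    (hdim : ∀ U ∈ C, Module.finrank F U = k)
    (hdist : ∀ U ∈ C, ∀ W ∈ C, U ≠ W → d ≤ sDist U W) : C.ncard ≤ Aq F N d k :=
  le_csSup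
    ⟨Nat.card (Submodule F (Fin N → F)), by rintro _ ⟨C', -, rfl, -, -⟩; exact C'.ncard_le_card⟩
    ⟨C, C.toFinite, rfl, hdim, hdist⟩

variable {ι : Type*} {f : ι → Submodule F (Fin N → F)} {s : Set ι}

lemma injOn_of_pairwise_finrank_inf_add_le (he : 1 ≤ e)
    (hdim : ∀ i ∈ s, Module.finrank F (f i) = k)
    (hs : s.Pairwise fun i j => Module.finrank F ↥(f i ⊓ f j) + e ≤ k) : s.InjOn f := by
  intro i hi j hj hij
  by_contra hne
  have : Module.finrank F ↥(f i ⊓ f j) + e ≤ k := hs hi hj hne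
  rw [hij, inf_idem, hdim j hj] at this
  omega

lemma two_mul_le_sDist_of_pairwise_finrank_inf_add_le
    (hdim : ∀ i ∈ s, Module.finrank F (f i) = k)
    (hs : s.Pairwise fun i j => Module.finrank F ↥(f i ⊓ f j) + e ≤ k) :
    ∀ U ∈ f '' s, ∀ W ∈ f '' s, U ≠ W → 2 * e ≤ sDist U W := by
  rintro _ ⟨i, hi, rfl⟩ _ ⟨j, hj, rfl⟩ hne
  have := hs hi hj (ne_of_apply_ne f hne)
  rw [sDist_eq, hdim i hi, hdim j hj]
  omega

end Codes

section LiftedCode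

variable {F : Type*} [Field F] {k n e : ℕ} {Q₁ Q₂ : Finset (Matrix (Fin k) (Fin n) F)}

noncomputable def liftIdSum : Matrix (Fin k) (Fin n) F ⊕ Matrix (Fin k) (Fin n) F →
    Submodule F (Fin (n + k) → F) :=
  Sum.elim liftId liftIdR

lemma finrank_liftIdSum (x : Matrix (Fin k) (Fin n) F ⊕ Matrix (Fin k) (Fin n) F) :
    Module.finrank F (liftIdSum x) = k := by
  rcases x with A | B
  exacts [finrank_liftId A, finrank_liftIdR B]

lemma pairwise_finrank_liftIdSum_inf_add_le (hek : e ≤ k) (hkn : k ≤ n)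
    (hQ₁ : ∀ A ∈ Q₁, ∀ B ∈ Q₁, A ≠ B → e ≤ (A - B).rank)
    (hQ₂ : ∀ A ∈ Q₂, ∀ B ∈ Q₂, A ≠ B → e ≤ (A - B).rank)
    (hQ₂r : ∀ B ∈ Q₂, B.rank ≤ k - e) :
    (Q₁.disjSum Q₂ : Set (Matrix (Fin k) (Fin n) F ⊕ Matrix (Fin k) (Fin n) F)).Pairwise
      fun x y => Module.finrank F ↥(liftIdSum x ⊓ liftIdSum y) + e ≤ k := by
  rintro (A | B) hx (A' | B') hy hne <;>
    simp only [Finset.mem_coe, Finset.inl_mem_disjSum, Finset.inr_mem_disjSum, ne_eq,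
      Sum.inl.injEq, Sum.inr.injEq, reduceCtorEq, not_false_eq_true] at hx hy hne
  · change Module.finrank F ↥(liftId A ⊓ liftId A') + e ≤ k
    have := finrank_liftId_inf_liftId_add_rank_le A A'
    have := hQ₁ A hx A' hy hne
    omega
  · change Module.finrank F ↥(liftId A ⊓ liftIdR B') + e ≤ k
    have := finrank_liftId_inf_liftIdR_le hkn A B'
    have := hQ₂r B' hy
    omega
  · change Module.finrank F ↥(liftIdR B ⊓ liftId A') + e ≤ k
    have := finrank_liftId_inf_liftIdR_le hkn A' B
    have := hQ₂r B hx
    rw [inf_comm]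
    omega
  · change Module.finrank F ↥(liftIdR B ⊓ liftIdR B') + e ≤ k
    have := finrank_liftIdR_inf_liftIdR_add_rank_le B B'
    have := hQ₂ B hx B' hy hne
    omega

end LiftedCode

theorem stmt4_general (k n e : ℕ) (he : 1 ≤ e) (hek : e ≤ k) (hkn : k ≤ n)
    (F : Type*) [Field F] [Fintype F]
    (Q₁ Q₂ : Finset (Matrix (Fin k) (Fin n) F))
    (hQ₁ : ∀ A ∈ Q₁, ∀ B ∈ Q₁, A ≠ B → e ≤ (A - B).rank)
    (hQ₂ : ∀ A ∈ Q₂, ∀ B ∈ Q₂, A ≠ B → e ≤ (A - B).rank)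
    (hQ₂r : ∀ B ∈ Q₂, B.rank ≤ k - e) :
    Set.ncard ((fun A : Matrix (Fin k) (Fin n) F => liftId A) '' ↑Q₁
        ∪ (fun B : Matrix (Fin k) (Fin n) F => liftIdR B) '' ↑Q₂) = Q₁.card + Q₂.card ∧
    (∀ U ∈ (fun A : Matrix (Fin k) (Fin n) F => liftId A) '' ↑Q₁
        ∪ (fun B : Matrix (Fin k) (Fin n) F => liftIdR B) '' ↑Q₂,
      Module.finrank F ↥U = k) ∧
    (∀ U ∈ (fun A : Matrix (Fin k) (Fin n) F => liftId A) '' ↑Q₁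
        ∪ (fun B : Matrix (Fin k) (Fin n) F => liftIdR B) '' ↑Q₂,
      ∀ W ∈ (fun A : Matrix (Fin k) (Fin n) F => liftId A) '' ↑Q₁
        ∪ (fun B : Matrix (Fin k) (Fin n) F => liftIdR B) '' ↑Q₂,
      U ≠ W → 2 * e ≤ sDist U W) ∧
    Q₁.card + Q₂.card ≤ Aq F (n + k) (2 * e) k := by
  have hcode : (fun A => liftId A) '' ↑Q₁ ∪ (fun B => liftIdR B) '' ↑Q₂ =
      liftIdSum ''
        (Q₁.disjSum Q₂ : Set (Matrix (Fin k) (Fin n) F ⊕ Matrix (Fin k) (Fin n) F)) := by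
    ext U
    simp [Finset.mem_disjSum, liftIdSum]
  have hpair := pairwise_finrank_liftIdSum_inf_add_le hek hkn hQ₁ hQ₂ hQ₂r
  have hdim : ∀ x ∈ Q₁.disjSum Q₂, Module.finrank F (liftIdSum x) = k :=
    fun x _ => finrank_liftIdSum x
  rw [hcode]
  have hcard := (injOn_of_pairwise_finrank_inf_add_le he hdim hpair).ncard_image
  rw [Set.ncard_coe_finset, Finset.card_disjSum] at hcard
  have hdist := two_mul_le_sDist_of_pairwise_finrank_inf_add_le hdim hpair
  refine ⟨hcard, ?_, hdist, hcard ▸ ncard_le_Aq ?_ hdist⟩ <;>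
    exact Set.forall_mem_image.mpr hdim

theorem stmt4 (q k n e : ℕ) (hq : IsPrimePow q) (he : 1 ≤ e) (hek : e ≤ k) (hkn : k ≤ n)
    (F : Type*) [Field F] [Fintype F] (hF : Fintype.card F = q)
    (Q₁ Q₂ : Finset (Matrix (Fin k) (Fin n) F))
    (hQ₁ : ∀ A ∈ Q₁, ∀ B ∈ Q₁, A ≠ B → e ≤ (A - B).rank)
    (hQ₂ : ∀ A ∈ Q₂, ∀ B ∈ Q₂, A ≠ B → e ≤ (A - B).rank)
    (hQ₂r : ∀ B ∈ Q₂, B.rank ≤ k - e) :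
    Set.ncard ((fun A : Matrix (Fin k) (Fin n) F => liftId A) '' ↑Q₁
        ∪ (fun B : Matrix (Fin k) (Fin n) F => liftIdR B) '' ↑Q₂) = Q₁.card + Q₂.card ∧
    (∀ U ∈ (fun A : Matrix (Fin k) (Fin n) F => liftId A) '' ↑Q₁
        ∪ (fun B : Matrix (Fin k) (Fin n) F => liftIdR B) '' ↑Q₂,
      Module.finrank F ↥U = k) ∧
    (∀ U ∈ (fun A : Matrix (Fin k) (Fin n) F => liftId A) '' ↑Q₁
        ∪ (fun B : Matrix (Fin k) (Fin n) F => liftIdR B) '' ↑Q₂,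
      ∀ W ∈ (fun A : Matrix (Fin k) (Fin n) F => liftId A) '' ↑Q₁
        ∪ (fun B : Matrix (Fin k) (Fin n) F => liftIdR B) '' ↑Q₂,
      U ≠ W → 2 * e ≤ sDist U W) ∧
    Q₁.card + Q₂.card ≤ Aq F (n + k) (2 * e) k :=
  stmt4_general k n e he hek hkn F Q₁ Q₂ hQ₁ hQ₂ hQ₂r
end

section
/- Let q be a prime power, let d be even, write e = d/2, suppose n ≥ k ≥ d ≥ 2 and s ≥ 1. Let Q_k ⊆ F_q^{k×k} be an MRD code with minimum rank distance e and Q_n ⊆ F_q^{k×n} an MRD code with minimum rank distance e. Put S_k = Σ_{r=e}^{k−e} A_r(Q_k) and S_n = Σ_{r=e}^{k−e} A_r(Q_n). Then A_q((s+1)k + n, d, k) ≥ Σ_{j=0}^{s} q^{((s−j)k + n)(k−e+1)} · S_k^j + S_n · S_k^{s−1}. -/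
open Matrix

/-!
Each codeword is the row space of a `k × ((s + 1)k + n)` matrix `[A₀ | ⋯ | A_s | B]` with an
identity pivot block `A_j = 1`, blocks before the pivot taken from `L₀ = {0} ∪ L`, where `L` is
the set of codewords of `Q_k` of rank in `[e, k - e]`, codewords of `Q_k` after it, and `B ∈ Q_n`.
Pivot `j` with blocks before it in `L` gives the `j`-th summand; pivot `s` with a zero block
`s - 1`, blocks before it in `L` and `B` of rank in `[e, k - e]` gives the last term.

If `G` has pivot `j` and `H` has pivot `j'`, then `H - H_j G` (with `H_j` the `j`-th block of `H`)
vanishes in the pivot columns of `G`, so its row space meets that of `G` trivially and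
`dim (⟨G⟩ + ⟨H⟩) ≥ k + rank (H - H_j G)`. For `j < j'` its `j'`-th block `1 - H_j A_{j'}` has
rank at least `k - rank H_j ≥ e`; for `j = j'` one of its blocks is the difference of two distinct
elements of `L₀`, `Q_k` or `Q_n`, all codes of minimum rank distance `e`. Hence distinct
codewords are at subspace distance at least `2e = d`.
-/

theorem Submodule.finrank_map_add_finrank_le_finrank_sup {F V W : Type*} [Field F]
    [AddCommGroup V] [Module F V] [AddCommGroup W] [Module F W] [FiniteDimensional F V]
    (φ : V →ₗ[F] W) (U K : Submodule F V) (hK : K ≤ LinearMap.ker φ) :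
    Module.finrank F (U.map φ) + Module.finrank F K ≤ Module.finrank F ↥(U ⊔ K) := by
  have hrange : U.map φ ≤ LinearMap.range (φ.domRestrict (U ⊔ K)) := by
    rw [LinearMap.range_domRestrict]
    exact Submodule.map_mono le_sup_left
  have hker : K.comap (U ⊔ K).subtype ≤ LinearMap.ker (φ.domRestrict (U ⊔ K)) := by
    rw [LinearMap.ker_domRestrict]
    exact Submodule.comap_mono hK
  calc Module.finrank F (U.map φ) + Module.finrank F K
      = Module.finrank F (U.map φ) + Module.finrank F (K.comap (U ⊔ K).subtype) := by
        rw [(Submodule.comapSubtypeEquivOfLe le_sup_right).finrank_eq]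
    _ ≤ Module.finrank F (LinearMap.range (φ.domRestrict (U ⊔ K)))
        + Module.finrank F (LinearMap.ker (φ.domRestrict (U ⊔ K))) :=
        add_le_add (Submodule.finrank_mono hrange) (Submodule.finrank_mono hker)
    _ = Module.finrank F ↥(U ⊔ K) := LinearMap.finrank_range_add_finrank_ker _

namespace Matrix

variable {F : Type*} [Field F] {m n : Type*}

noncomputable def rowSpan (G : Matrix m n F) : Submodule F (n → F) :=
  Submodule.span F (Set.range G)

theorem finrank_rowSpan [Finite m] [Fintype n] (G : Matrix m n F) :
    Module.finrank F G.rowSpan = G.rank :=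
  G.rank_eq_finrank_span_row.symm

theorem map_funLeft_rowSpan {ι : Type*} (G : Matrix m n F) (c : ι → n) :
    G.rowSpan.map (LinearMap.funLeft F F c) = (G.submatrix id c).rowSpan := by
  rw [rowSpan, rowSpan, Submodule.map_span]
  exact congrArg _ (Set.range_comp (LinearMap.funLeft F F c) (G : m → n → F)).symm

@[simp]
theorem rowSpan_zero : (0 : Matrix m n F).rowSpan = ⊥ :=
  Submodule.span_eq_bot.2 (by rintro _ ⟨i, rfl⟩; rfl)

theorem rowSpan_mul_le [Fintype m] {l : Type*} (X : Matrix l m F) (G : Matrix m n F) :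
    (X * G).rowSpan ≤ G.rowSpan := by
  rw [rowSpan, Submodule.span_le]
  rintro _ ⟨i, rfl⟩
  rw [mul_apply_eq_vecMul, vecMul_eq_sum]
  exact Submodule.sum_mem _ fun l _ => Submodule.smul_mem _ _ (Submodule.subset_span ⟨l, rfl⟩)

theorem rowSpan_sub_mul_le [Fintype m] (G H : Matrix m n F) (X : Matrix m m F) :
    (H - X * G).rowSpan ≤ G.rowSpan ⊔ H.rowSpan := by
  rw [rowSpan, Submodule.span_le]
  rintro _ ⟨i, rfl⟩
  exact sub_mem (Submodule.mem_sup_right (Submodule.subset_span ⟨i, rfl⟩))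
    (Submodule.mem_sup_left (rowSpan_mul_le X G (Submodule.subset_span ⟨i, rfl⟩)))

variable [Fintype n]

def MinRankDistGE (C : Set (Matrix m n F)) (e : ℕ) : Prop :=
  C.Pairwise fun A B => e ≤ (A - B).rank

theorem rank_add_le (A B : Matrix m n F) : (A + B).rank ≤ A.rank + B.rank := by
  calc (A + B).rank
      ≤ Module.finrank F ↥(LinearMap.range A.mulVecLin ⊔ LinearMap.range B.mulVecLin) := by
        refine Submodule.finrank_mono ?_
        rintro _ ⟨x, rfl⟩
        rw [mulVecLin_add, LinearMap.add_apply]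
        exact Submodule.add_mem_sup (LinearMap.mem_range_self _ x) (LinearMap.mem_range_self _ x)
    _ ≤ A.rank + B.rank := Submodule.finrank_add_le_finrank_add_finrank _ _

theorem rank_neg (A : Matrix m n F) : (-A).rank = A.rank := by
  have : (-A).mulVecLin = -A.mulVecLin := by ext; simp
  rw [rank, rank, this, LinearMap.range_neg]

theorem card_le_rank_one_sub_mul_add_rank [Fintype m] [DecidableEq m] (Y : Matrix m n F)
    (Z : Matrix n m F) : Fintype.card m ≤ (1 - Y * Z).rank + Y.rank := by
  have h := rank_add_le (1 - Y * Z) (Y * Z)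
  rw [sub_add_cancel, rank_one] at h
  exact h.trans (add_le_add_right (rank_mul_le_left Y Z) _)

theorem card_add_le_finrank_sup_rowSpan [Fintype m] [DecidableEq m] {τ : Type*} [Fintype τ]
    {e : ℕ} (G H : Matrix m n F) (cj : m → n) (ct : τ → n) (hG : G.submatrix id cj = 1)
    (he : e ≤ (H.submatrix id ct - H.submatrix id cj * G.submatrix id ct).rank) :
    Fintype.card m + e ≤ Module.finrank F ↥(G.rowSpan ⊔ H.rowSpan) := by
  set K := H - H.submatrix id cj * G
  have hKt : K.submatrix id ct = H.submatrix id ct - H.submatrix id cj * G.submatrix id ct := by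
    ext; simp [K, mul_apply]
  have hKj : K.submatrix id cj = 0 := by
    have : K.submatrix id cj = H.submatrix id cj - H.submatrix id cj * G.submatrix id cj := by
      ext; simp [K, mul_apply]
    rw [this, hG, Matrix.mul_one, sub_self]
  have hKker : K.rowSpan ≤ LinearMap.ker (LinearMap.funLeft F F cj) := by
    rw [LinearMap.le_ker_iff_map, map_funLeft_rowSpan, hKj, rowSpan_zero]
  calc Fintype.card m + e
      ≤ Module.finrank F (G.rowSpan.map (LinearMap.funLeft F F cj))
          + Module.finrank F K.rowSpan := by
        rw [map_funLeft_rowSpan, hG, finrank_rowSpan, finrank_rowSpan, rank_one]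
        exact Nat.add_le_add_left (he.trans (hKt ▸ rank_submatrix_le K id ct)) _
    _ ≤ Module.finrank F ↥(G.rowSpan ⊔ K.rowSpan) :=
        Submodule.finrank_map_add_finrank_le_finrank_sup _ _ _ hKker
    _ ≤ Module.finrank F ↥(G.rowSpan ⊔ H.rowSpan) :=
        Submodule.finrank_mono (sup_le le_sup_left (rowSpan_sub_mul_le G H _))

end Matrix

section SubspaceCode

variable {F : Type*} [Field F] {N : ℕ}

theorem card_le_Aq [Finite F] {d k : ℕ} (C : Finset (Submodule F (Fin N → F)))
    (hk : ∀ U ∈ C, Module.finrank F U = k) (hd : ∀ U ∈ C, ∀ W ∈ C, U ≠ W → d ≤ sDist U W) :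
    C.card ≤ Aq F N d k := by
  have : Finite (Submodule F (Fin N → F)) := Finite.of_injective _ SetLike.coe_injective
  refine le_csSup ⟨Nat.card (Submodule F (Fin N → F)), ?_⟩ ⟨C, C.finite_toSet, by simp, hk, hd⟩
  rintro _ ⟨C', -, rfl, -, -⟩
  exact Set.ncard_le_card C'

theorem two_mul_le_sDist {U W : Submodule F (Fin N → F)} {k e : ℕ}
    (hU : Module.finrank F U = k) (hW : Module.finrank F W = k)
    (h : k + e ≤ Module.finrank F ↥(U ⊔ W)) : 2 * e ≤ sDist U W := by
  have := Submodule.finrank_sup_add_finrank_inf_eq U W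
  unfold sDist
  omega

theorem card_le_Aq_of_add_le_finrank_sup [Finite F] {ι : Type*} {k e : ℕ}
    (T : Finset ι) (f : ι → Submodule F (Fin N → F)) (he : 1 ≤ e)
    (hk : ∀ p ∈ T, Module.finrank F (f p) = k)
    (hf : ∀ p ∈ T, ∀ p' ∈ T, p ≠ p' → k + e ≤ Module.finrank F ↥(f p ⊔ f p')) :
    T.card ≤ Aq F N (2 * e) k := by
  classical
  have hinj : Set.InjOn f T := by
    intro p hp p' hp' hpp'
    by_contra hne
    have := hf p hp p' hp' hne
    rw [hpp', sup_idem, hk p' hp'] at this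
    omega
  rw [← Finset.card_image_of_injOn hinj]
  refine card_le_Aq _ (by simpa using hk) ?_
  simp only [Finset.mem_image]
  rintro _ ⟨p, hp, rfl⟩ _ ⟨p', hp', rfl⟩ hne
  exact two_mul_le_sDist (hk p hp) (hk p' hp') (hf p hp p' hp' fun h => hne (h ▸ rfl))

end SubspaceCode

section BlockMatrix

variable {F : Type*} {k n s : ℕ}

def blockColEquiv (s k n : ℕ) : (Fin (s + 1) × Fin k) ⊕ Fin n ≃ Fin ((s + 1) * k + n) :=
  (finProdFinEquiv.sumCongr (Equiv.refl _)).trans finSumFinEquiv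

def blockCol (j : Fin (s + 1)) (c : Fin k) : Fin ((s + 1) * k + n) :=
  blockColEquiv s k n (Sum.inl (j, c))

def tailCol (c : Fin n) : Fin ((s + 1) * k + n) :=
  blockColEquiv s k n (Sum.inr c)

/-- The `k × ((s + 1)k + n)` matrix `[A 0 | A 1 | ⋯ | A s | B]`. -/
def blockMatrix (A : Fin (s + 1) → Matrix (Fin k) (Fin k) F) (B : Matrix (Fin k) (Fin n) F) :
    Matrix (Fin k) (Fin ((s + 1) * k + n)) F :=
  of fun i x => Sum.elim (fun jc => A jc.1 i jc.2) (B i) ((blockColEquiv s k n).symm x)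

@[simp]
theorem blockMatrix_submatrix_blockCol (A : Fin (s + 1) → Matrix (Fin k) (Fin k) F)
    (B : Matrix (Fin k) (Fin n) F) (j : Fin (s + 1)) :
    (blockMatrix A B).submatrix id (blockCol j) = A j := by
  ext; simp [blockMatrix, blockCol]

@[simp]
theorem blockMatrix_submatrix_tailCol (A : Fin (s + 1) → Matrix (Fin k) (Fin k) F)
    (B : Matrix (Fin k) (Fin n) F) :
    (blockMatrix A B).submatrix id (tailCol (s := s) (k := k)) = B := by
  ext; simp [blockMatrix, tailCol]

variable [Field F] {A A' : Fin (s + 1) → Matrix (Fin k) (Fin k) F}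
  {B B' : Matrix (Fin k) (Fin n) F} {j : Fin (s + 1)} {e : ℕ}

theorem finrank_rowSpan_blockMatrix (hA : A j = 1) :
    Module.finrank F (blockMatrix A B).rowSpan = k := by
  rw [finrank_rowSpan]
  refine le_antisymm (rank_le_height _) ?_
  simpa [hA] using rank_submatrix_le (blockMatrix A B) id (blockCol j)

theorem add_le_finrank_sup_blockMatrix_of_lt {j' : Fin (s + 1)} (hek : e ≤ k) (hA : A j = 1)
    (hA' : A' j' = 1) (hrank : (A' j).rank ≤ k - e) :
    k + e ≤ Module.finrank F ↥((blockMatrix A B).rowSpan ⊔ (blockMatrix A' B').rowSpan) := by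
  have h := card_le_rank_one_sub_mul_add_rank (A' j) (A j')
  rw [Fintype.card_fin] at h
  simpa using card_add_le_finrank_sup_rowSpan (e := e) _ _ (blockCol j) (blockCol j')
    (by simp [hA]) (by simp only [blockMatrix_submatrix_blockCol, hA']; omega)

theorem add_le_finrank_sup_blockMatrix_of_block (t : Fin (s + 1)) (hA : A j = 1)
    (hA' : A' j = 1) (ht : e ≤ (A' t - A t).rank) :
    k + e ≤ Module.finrank F ↥((blockMatrix A B).rowSpan ⊔ (blockMatrix A' B').rowSpan) := by
  simpa using card_add_le_finrank_sup_rowSpan _ _ (blockCol j) (blockCol t) (by simp [hA])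
    (by simpa [hA'] using ht)

theorem add_le_finrank_sup_blockMatrix_of_tail (hA : A j = 1) (hA' : A' j = 1)
    (hB : e ≤ (B' - B).rank) :
    k + e ≤ Module.finrank F ↥((blockMatrix A B).rowSpan ⊔ (blockMatrix A' B').rowSpan) := by
  simpa using card_add_le_finrank_sup_rowSpan _ _ (blockCol j) tailCol (by simp [hA])
    (by simpa [hA'] using hB)

end BlockMatrix

section SplitPiFinset

variable {s : ℕ} {α : Type*}

def splitPiFinset (j : Fin (s + 1)) (a c b : Finset α) : Finset (Fin (s + 1) → α) :=
  Fintype.piFinset fun i => if i < j then a else if i = j then c else b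

theorem mem_splitPiFinset {j : Fin (s + 1)} {a c b : Finset α} {A : Fin (s + 1) → α} :
    A ∈ splitPiFinset j a c b ↔ (∀ i < j, A i ∈ a) ∧ A j ∈ c ∧ ∀ i, j < i → A i ∈ b := by
  simp only [splitPiFinset, Fintype.mem_piFinset]
  refine ⟨fun h => ⟨fun i hi => by simpa [hi] using h i, by simpa using h j,
    fun i hi => by simpa [hi.not_gt, hi.ne'] using h i⟩, fun ⟨ha, hc, hb⟩ i => ?_⟩
  rcases lt_trichotomy i j with hi | rfl | hi
  · simpa [hi] using ha i hi
  · simpa using hc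
  · simpa [hi.not_gt, hi.ne'] using hb i hi

theorem card_splitPiFinset (j : Fin (s + 1)) (a c b : Finset α) :
    (splitPiFinset j a c b).card = a.card ^ (j : ℕ) * c.card * b.card ^ (s - j) := by
  have hlt : Finset.univ.filter (· < j) = Finset.Iio j := by ext; simp
  have heq : Finset.univ.filter (fun i => ¬ i < j ∧ i = j) = {j} := by ext; simp; omega
  have hgt : Finset.univ.filter (fun i => ¬ i < j ∧ ¬ i = j) = Finset.Ioi j := by
    ext; simp; omega
  simp only [splitPiFinset, Fintype.card_piFinset, apply_ite Finset.card]
  rw [Finset.prod_ite, Finset.prod_ite, Finset.filter_filter, Finset.filter_filter, hlt, heq, hgt]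
  simp [Fin.card_Iio, Fin.card_Ioi, mul_assoc]

end SplitPiFinset

section PivotCode

variable {F : Type*} [Field F] {k n s e : ℕ}
  (L Q : Finset (Matrix (Fin k) (Fin k) F)) (R : Finset (Matrix (Fin k) (Fin n) F))

noncomputable def blockRowSpan
    (p : (Fin (s + 1) → Matrix (Fin k) (Fin k) F) × Matrix (Fin k) (Fin n) F) :
    Submodule F (Fin ((s + 1) * k + n) → F) :=
  (blockMatrix p.1 p.2).rowSpan

def pivotCode (j : Fin (s + 1)) :
    Finset ((Fin (s + 1) → Matrix (Fin k) (Fin k) F) × Matrix (Fin k) (Fin n) F) :=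
  splitPiFinset j L {1} Q ×ˢ R

variable {L Q R}

theorem mem_pivotCode {j : Fin (s + 1)}
    {p : (Fin (s + 1) → Matrix (Fin k) (Fin k) F) × Matrix (Fin k) (Fin n) F} :
    p ∈ pivotCode L Q R j ↔
      (∀ i < j, p.1 i ∈ L) ∧ p.1 j = 1 ∧ (∀ i, j < i → p.1 i ∈ Q) ∧ p.2 ∈ R := by
  simp [pivotCode, mem_splitPiFinset, and_assoc]

theorem card_pivotCode (j : Fin (s + 1)) :
    (pivotCode L Q R j).card = L.card ^ (j : ℕ) * Q.card ^ (s - j) * R.card := by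
  simp [pivotCode, card_splitPiFinset]

theorem pivotCode_mono {L' : Finset (Matrix (Fin k) (Fin k) F)} (h : L ⊆ L') (j : Fin (s + 1)) :
    pivotCode L Q R j ⊆ pivotCode L' Q R j := fun _ hp =>
  have ⟨hL, h1, hQ, hR⟩ := mem_pivotCode.1 hp
  mem_pivotCode.2 ⟨fun i hi => h (hL i hi), h1, hQ, hR⟩

theorem disjoint_pivotCode (h1 : (1 : Matrix (Fin k) (Fin k) F) ∉ L) {j j' : Fin (s + 1)}
    (hjj' : j ≠ j') : Disjoint (pivotCode L Q R j) (pivotCode L Q R j') := by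
  wlog hlt : j < j' generalizing j j'
  · exact (this hjj'.symm (lt_of_le_of_ne (not_lt.1 hlt) hjj'.symm)).symm
  refine Finset.disjoint_left.2 fun p hp hp' => h1 ?_
  rw [← (mem_pivotCode.1 hp).2.1]
  exact (mem_pivotCode.1 hp').1 j hlt

theorem add_le_finrank_sup_of_mem_pivotCode (hek : e ≤ k) (hL : ∀ X ∈ L, X.rank ≤ k - e)
    (hLd : MinRankDistGE (L : Set (Matrix (Fin k) (Fin k) F)) e)
    (hQd : MinRankDistGE (Q : Set (Matrix (Fin k) (Fin k) F)) e)
    (hRd : MinRankDistGE (R : Set (Matrix (Fin k) (Fin n) F)) e) {j j' : Fin (s + 1)}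
    {p p' : (Fin (s + 1) → Matrix (Fin k) (Fin k) F) × Matrix (Fin k) (Fin n) F}
    (hp : p ∈ pivotCode L Q R j) (hp' : p' ∈ pivotCode L Q R j') (hne : p ≠ p') :
    k + e ≤ Module.finrank F ↥(blockRowSpan p ⊔ blockRowSpan p') := by
  wlog hle : j ≤ j' generalizing j j' p p'
  · rw [sup_comm]
    exact this hp' hp hne.symm (le_of_not_ge hle)
  obtain ⟨hpL, hp1, hpQ, hpR⟩ := mem_pivotCode.1 hp
  obtain ⟨hpL', hp1', hpQ', hpR'⟩ := mem_pivotCode.1 hp'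
  rcases hle.lt_or_eq with hlt | rfl
  · exact add_le_finrank_sup_blockMatrix_of_lt hek hp1 hp1' (hL _ (hpL' j hlt))
  by_cases hA : p.1 = p'.1
  · have hB : p.2 ≠ p'.2 := fun hB => hne (Prod.ext hA hB)
    exact add_le_finrank_sup_blockMatrix_of_tail hp1 hp1' (hRd hpR' hpR hB.symm)
  obtain ⟨t, ht⟩ := Function.ne_iff.1 hA
  refine add_le_finrank_sup_blockMatrix_of_block t hp1 hp1' ?_
  rcases lt_trichotomy t j with htj | rfl | htj
  · exact hLd (hpL' t htj) (hpL t htj) (Ne.symm ht)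
  · exact absurd (hp1.trans hp1'.symm) ht
  · exact hQd (hpQ' t htj) (hpQ t htj) (Ne.symm ht)

end PivotCode

section Construction

variable {F : Type*} [Field F] {k n s e : ℕ}
  {L Q : Finset (Matrix (Fin k) (Fin k) F)} {R R' : Finset (Matrix (Fin k) (Fin n) F)}

def extraCode (s : ℕ) (L : Finset (Matrix (Fin k) (Fin k) F))
    (R' : Finset (Matrix (Fin k) (Fin n) F)) :
    Finset ((Fin (s + 1) → Matrix (Fin k) (Fin k) F) × Matrix (Fin k) (Fin n) F) :=
  splitPiFinset ⟨s - 1, by omega⟩ L {0} {1} ×ˢ R'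

theorem card_extraCode : (extraCode s L R').card = L.card ^ (s - 1) * R'.card := by
  simp [extraCode, card_splitPiFinset]

theorem extraCode_subset_pivotCode [DecidableEq F] (hs : 1 ≤ s) (hR' : R' ⊆ R) :
    extraCode s L R' ⊆ pivotCode (insert 0 L) Q R (Fin.last s) := by
  intro p hp
  simp only [extraCode, Finset.mem_product, mem_splitPiFinset] at hp
  obtain ⟨⟨hL, h0, h1⟩, hpR⟩ := hp
  refine mem_pivotCode.2 ⟨fun i hi => ?_, by simpa using h1 _ (by simp [Fin.lt_def]; omega),
    fun i hi => absurd hi (not_lt.2 i.le_last), hR' hpR⟩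
  rcases lt_or_eq_of_le (show i ≤ ⟨s - 1, by omega⟩ by simp [Fin.le_def, Fin.lt_def] at hi ⊢; omega)
    with h | h
  · exact Finset.mem_insert_of_mem (hL i h)
  · exact h ▸ Finset.mem_insert.2 (.inl (Finset.mem_singleton.1 h0))

theorem disjoint_extraCode_pivotCode (hs : 1 ≤ s) (h0 : (0 : Matrix (Fin k) (Fin k) F) ∉ L) :
    Disjoint (extraCode s L R') (pivotCode L Q R (Fin.last s)) := by
  refine Finset.disjoint_left.2 fun p hp hp' => h0 ?_
  simp only [extraCode, Finset.mem_product, mem_splitPiFinset, Finset.mem_singleton] at hp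
  rw [← hp.1.2.1]
  exact (mem_pivotCode.1 hp').1 _ (by simp [Fin.lt_def]; omega)

theorem sum_card_pivotCode_add_card_extraCode_le_Aq [Finite F] (he : 1 ≤ e) (hek : e ≤ k)
    (hs : 1 ≤ s) (hLQ : L ⊆ Q) (hL : ∀ X ∈ L, e ≤ X.rank ∧ X.rank ≤ k - e) (hR' : R' ⊆ R)
    (hQd : MinRankDistGE (Q : Set (Matrix (Fin k) (Fin k) F)) e)
    (hRd : MinRankDistGE (R : Set (Matrix (Fin k) (Fin n) F)) e) :
    ∑ j : Fin (s + 1), (pivotCode L Q R j).card + (extraCode s L R').card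
      ≤ Aq F ((s + 1) * k + n) (2 * e) k := by
  classical
  set L₀ := insert 0 L
  have hL₀ : ∀ X ∈ L₀, X.rank ≤ k - e := by
    simpa [L₀, rank_zero] using fun X hX => (hL X hX).2
  have hL₀d : MinRankDistGE (L₀ : Set (Matrix (Fin k) (Fin k) F)) e := by
    rw [Finset.coe_insert]
    refine Set.Pairwise.insert (hQd.mono hLQ) fun X hX _ => ?_
    simpa [rank_neg] using (hL X hX).1
  have h0 : (0 : Matrix (Fin k) (Fin k) F) ∉ L := fun h => by
    have := (hL 0 h).1
    rw [rank_zero] at this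
    omega
  have h1 : (1 : Matrix (Fin k) (Fin k) F) ∉ L₀ := fun h => by
    have := hL₀ 1 h
    rw [rank_one, Fintype.card_fin] at this
    omega
  set T : Finset ((Fin (s + 1) → Matrix (Fin k) (Fin k) F) × Matrix (Fin k) (Fin n) F) :=
    Finset.univ.biUnion (pivotCode L Q R) ∪ extraCode s L R'
  have hsub : T ⊆ Finset.univ.biUnion (pivotCode L₀ Q R) :=
    Finset.union_subset
      (Finset.biUnion_mono fun j _ => pivotCode_mono (Finset.subset_insert _ _) j)
      ((extraCode_subset_pivotCode hs hR').trans
        (Finset.subset_biUnion_of_mem _ (Finset.mem_univ _)))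
  have hcard : T.card = ∑ j : Fin (s + 1), (pivotCode L Q R j).card + (extraCode s L R').card := by
    rw [Finset.card_union_of_disjoint, Finset.card_biUnion]
    · exact fun j _ j' _ h => disjoint_pivotCode (fun h' => h1 (Finset.mem_insert_of_mem h')) h
    refine (Finset.disjoint_biUnion_left _ _ _).2 fun j _ => ?_
    by_cases hj : j = Fin.last s
    · exact hj ▸ (disjoint_extraCode_pivotCode hs h0).symm
    · exact (disjoint_pivotCode h1 hj).mono (pivotCode_mono (Finset.subset_insert _ _) j)
        (extraCode_subset_pivotCode hs hR')
  rw [← hcard]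
  refine card_le_Aq_of_add_le_finrank_sup _ blockRowSpan he (fun p hp => ?_)
    (fun p hp p' hp' hne => ?_)
  · obtain ⟨j, -, hj⟩ := Finset.mem_biUnion.1 (hsub hp)
    exact finrank_rowSpan_blockMatrix (mem_pivotCode.1 hj).2.1
  · obtain ⟨j, -, hj⟩ := Finset.mem_biUnion.1 (hsub hp)
    obtain ⟨j', -, hj'⟩ := Finset.mem_biUnion.1 (hsub hp')
    exact add_le_finrank_sup_of_mem_pivotCode hek hL₀ hL₀d hQd hRd hj hj' hne

end Construction

theorem stmt12_general (q k n d e s : ℕ) (hde : d = 2 * e) (hd2 : 2 ≤ d)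
    (hdk : d ≤ k) (hs : 1 ≤ s)
    (F : Type*) [Field F] [Fintype F]
    (Qk : Finset (Matrix (Fin k) (Fin k) F)) (Qn : Finset (Matrix (Fin k) (Fin n) F))
    (hQkcard : Qk.card = q ^ (k * (k - e + 1)))
    (hQk : ∀ A ∈ Qk, ∀ B ∈ Qk, A ≠ B → e ≤ (A - B).rank)
    (hQncard : Qn.card = q ^ (n * (k - e + 1)))
    (hQn : ∀ A ∈ Qn, ∀ B ∈ Qn, A ≠ B → e ≤ (A - B).rank) :
    (∑ j ∈ Finset.range (s + 1),
        q ^ (((s - j) * k + n) * (k - e + 1)) *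
          (∑ r ∈ Finset.Icc e (k - e), (Qk.filter (fun X => X.rank = r)).card) ^ j)
      + (∑ r ∈ Finset.Icc e (k - e), (Qn.filter (fun X => X.rank = r)).card) *
          (∑ r ∈ Finset.Icc e (k - e), (Qk.filter (fun X => X.rank = r)).card) ^ (s - 1)
      ≤ Aq F ((s + 1) * k + n) d k := by
  classical
  subst hde
  have hmid {m : ℕ} {C : Finset (Matrix (Fin k) (Fin m) F)} :
      ∀ X ∈ C.filter (fun X => X.rank ∈ Finset.Icc e (k - e)), e ≤ X.rank ∧ X.rank ≤ k - e :=
    fun X hX => Finset.mem_Icc.1 (Finset.mem_filter.1 hX).2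
  have key := sum_card_pivotCode_add_card_extraCode_le_Aq (by omega) (by omega) hs
    (Finset.filter_subset (fun X => X.rank ∈ Finset.Icc e (k - e)) Qk) hmid
    (Finset.filter_subset (fun X => X.rank ∈ Finset.Icc e (k - e)) Qn)
    (fun A hA B hB h => hQk A hA B hB h) (fun A hA B hB h => hQn A hA B hB h)
  simp only [card_pivotCode, card_extraCode, ← Finset.sum_card_fiberwise_eq_card_filter] at key
  refine le_of_eq_of_le ?_ key
  rw [Fin.sum_univ_eq_sum_range (fun j => _ ^ j * Qk.card ^ (s - j) * Qn.card), mul_comm]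
  refine congrArg (· + _) (Finset.sum_congr rfl fun j _ => ?_)
  rw [hQkcard, hQncard, ← pow_mul, mul_assoc, ← pow_add, mul_comm]
  ring_nf

theorem stmt12 (q k n d e s : ℕ) (hq : IsPrimePow q) (hde : d = 2 * e) (hd2 : 2 ≤ d)
    (hdk : d ≤ k) (hkn : k ≤ n) (hs : 1 ≤ s)
    (F : Type*) [Field F] [Fintype F] (hF : Fintype.card F = q)
    (Qk : Finset (Matrix (Fin k) (Fin k) F)) (Qn : Finset (Matrix (Fin k) (Fin n) F))
    (hQkcard : Qk.card = q ^ (k * (k - e + 1)))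
    (hQk : ∀ A ∈ Qk, ∀ B ∈ Qk, A ≠ B → e ≤ (A - B).rank)
    (hQncard : Qn.card = q ^ (n * (k - e + 1)))
    (hQn : ∀ A ∈ Qn, ∀ B ∈ Qn, A ≠ B → e ≤ (A - B).rank) :
    (∑ j ∈ Finset.range (s + 1),
        q ^ (((s - j) * k + n) * (k - e + 1)) *
          (∑ r ∈ Finset.Icc e (k - e), (Qk.filter (fun X => X.rank = r)).card) ^ j)
      + (∑ r ∈ Finset.Icc e (k - e), (Qn.filter (fun X => X.rank = r)).card) *
          (∑ r ∈ Finset.Icc e (k - e), (Qk.filter (fun X => X.rank = r)).card) ^ (s - 1)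
      ≤ Aq F ((s + 1) * k + n) d k :=
  stmt12_general q k n d e s hde hd2 hdk hs F Qk Qn hQkcard hQk hQncard hQn
end
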